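/- Let S : ℝ² → ℝ satisfy the pointwise shape bound |S(x,y) + (x−y)²| ≤ C + c·log^{2/3}(2 + |x| + |y|) for all x, y, where c > 0 is a constant and C is a finite random variable. Let h₀ : ℝ → ℝ be upper semicontinuous and satisfy lim_{|x|→∞} (h₀(x) − x²)/|x| = −∞. Then for each y in a compact set K, the supremum sup_{x∈ℝ}(h₀(x) + S(x,y)) is finite and is attained, and there exists M > 0 (depending on C, c, K and h₀ but not on y ∈ K) such that sup_{x∈ℝ}(h₀(x) + S(x,y)) = sup_{|x| ≤ M}(h₀(x) + S(x,y)) for all y ∈ K. -/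

import Mathlib

open Set Filter

/-- log power bound: for `t ≥ 1`, `(log t)^(2/3) ≤ 1 + t`. -/
lemma aux_logpow (t : ℝ) (ht : 1 ≤ t) : (Real.log t) ^ ((2 : ℝ) / 3) ≤ 1 + t := by
  have hl : 0 ≤ Real.log t := Real.log_nonneg ht
  rcases le_or_gt (Real.log t) 1 with h | h
  · have : (Real.log t) ^ ((2 : ℝ) / 3) ≤ 1 := Real.rpow_le_one hl h (by norm_num)
    linarith
  · have h1 : (Real.log t) ^ ((2 : ℝ) / 3) ≤ (Real.log t) ^ (1 : ℝ) :=
      Real.rpow_le_rpow_of_exponent_le h.le (by norm_num)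
    rw [Real.rpow_one] at h1
    have h2 : Real.log t ≤ t - 1 := Real.log_le_sub_one_of_pos (by linarith)
    linarith

/-- An upper semicontinuous function attains its max on a nonempty compact set. -/
lemma aux_usc_max {f : ℝ → ℝ} (hf : UpperSemicontinuous f) {s : Set ℝ}
    (hs : IsCompact s) (hne : s.Nonempty) : ∃ a ∈ s, ∀ x ∈ s, f x ≤ f a := by
  by_contra h
  push_neg at h
  have hcov : s ⊆ ⋃ x ∈ s, f ⁻¹' Set.Iio (f x) := by
    intro a ha
    obtain ⟨x, hx, hfx⟩ := h a ha
    exact Set.mem_biUnion hx hfx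
  obtain ⟨t, hts, htfin, htcov⟩ :=
    hs.elim_finite_subcover_image (fun x _ => hf.isOpen_preimage (f x)) hcov
  obtain ⟨a₀, ha₀⟩ := hne
  have htne : t.Nonempty := by
    rcases Set.mem_iUnion₂.1 (htcov ha₀) with ⟨x, hx, _⟩
    exact ⟨x, hx⟩
  obtain ⟨a, hat, hamax⟩ := htfin.exists_maximalFor f t htne
  have hmax : ∀ x ∈ t, f x ≤ f a := by
    intro x hx
    rcases le_total (f x) (f a) with h' | h'
    · exact h'
    · exact (hamax hx h').ge
  have has : a ∈ s := hts hat
  rcases Set.mem_iUnion₂.1 (htcov has) with ⟨x, hx, hax⟩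
  exact absurd (hmax x hx) (not_le.2 hax)

theorem stmt_16 (S : ℝ → ℝ → ℝ) (hScont : Continuous fun p : ℝ × ℝ => S p.1 p.2)
    (C c : ℝ) (hc : 0 < c)
    (hshape : ∀ x y : ℝ,
      |S x y + (x - y) ^ 2| ≤ C + c * (Real.log (2 + |x| + |y|)) ^ ((2 : ℝ) / 3))
    (h₀ : ℝ → ℝ) (husc : UpperSemicontinuous h₀)
    (hgrow : Filter.Tendsto (fun x => (h₀ x - x ^ 2) / |x|) (Filter.cocompact ℝ) Filter.atBot)
    (K : Set ℝ) (hK : IsCompact K) :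
    ∃ M > (0 : ℝ), ∀ y ∈ K,
      BddAbove (Set.range fun x => h₀ x + S x y) ∧
      (∃ x : ℝ, h₀ x + S x y = sSup (Set.range fun x => h₀ x + S x y)) ∧
      sSup (Set.range fun x => h₀ x + S x y) =
        sSup ((fun x => h₀ x + S x y) '' Set.Icc (-M) M) := by
  -- bound on K
  obtain ⟨r, hr⟩ := hK.isBounded.subset_closedBall 0
  set R : ℝ := max r 1 with hRdef
  have hR1 : (1 : ℝ) ≤ R := le_max_right _ _
  have hyR : ∀ y ∈ K, |y| ≤ R := by
    intro y hy
    have := hr hy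
    rw [Metric.mem_closedBall, Real.dist_eq, sub_zero] at this
    exact this.trans (le_max_left _ _)
  -- growth estimate
  set A : ℝ := 2 * R + c + 2 with hAdef
  have hgrow' : ∀ᶠ x in Filter.cocompact ℝ, (h₀ x - x ^ 2) / |x| ≤ -A :=
    hgrow.eventually (eventually_le_atBot (-A))
  rw [cocompact_eq_atBot_atTop, eventually_sup, eventually_atBot, eventually_atTop] at hgrow'
  obtain ⟨⟨a, hab⟩, ⟨b, hbb⟩⟩ := hgrow'
  set N : ℝ := max 1 (max (-a) b) with hNdef
  have hN1 : (1 : ℝ) ≤ N := le_max_left _ _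
  have hNbound : ∀ x : ℝ, N ≤ |x| → h₀ x - x ^ 2 ≤ -A * |x| := by
    intro x hx
    have hxpos : 0 < |x| := lt_of_lt_of_le one_pos (hN1.trans hx)
    have hq : (h₀ x - x ^ 2) / |x| ≤ -A := by
      rcases abs_cases x with ⟨he, _⟩ | ⟨he, _⟩
      · apply hbb
        have : max (-a) b ≤ |x| := (le_max_right 1 _).trans hx
        linarith [le_max_right (-a) b, he ▸ this]
      · apply hab
        have : max (-a) b ≤ |x| := (le_max_right 1 _).trans hx
        have := (le_max_left (-a) b).trans this
        linarith
    calc h₀ x - x ^ 2 = (h₀ x - x ^ 2) / |x| * |x| := by field_simp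
      _ ≤ -A * |x| := mul_le_mul_of_nonneg_right hq (abs_nonneg x)
  -- lower bound for f_y 0
  set L : ℝ := h₀ 0 - R ^ 2 - C - c * (3 + R) with hLdef
  have hf0 : ∀ y ∈ K, L ≤ h₀ 0 + S 0 y := by
    intro y hy
    have hb := (abs_le.1 (hshape 0 y)).1
    have hlog : (Real.log (2 + |(0:ℝ)| + |y|)) ^ ((2:ℝ)/3) ≤ 3 + R := by
      have h1 : (1:ℝ) ≤ 2 + |(0:ℝ)| + |y| := by
        simp only [abs_zero]; linarith [abs_nonneg y]
      have := aux_logpow _ h1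
      simp only [abs_zero] at this ⊢
      linarith [hyR y hy]
    have hy2 : y ^ 2 ≤ R ^ 2 := by
      have := hyR y hy
      nlinarith [abs_nonneg y, sq_abs y]
    have hmul : c * (Real.log (2 + |(0:ℝ)| + |y|)) ^ ((2:ℝ)/3) ≤ c * (3 + R) :=
      mul_le_mul_of_nonneg_left hlog hc.le
    have : -(C + c * (Real.log (2 + |(0:ℝ)| + |y|)) ^ ((2:ℝ)/3)) ≤ S 0 y + (0 - y) ^ 2 := hb
    have h0y : (0 - y) ^ 2 = y ^ 2 := by ring
    rw [h0y] at this
    simp only [hLdef]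
    linarith
  -- choose M
  set M : ℝ := max N ((C + c * (3 + R) - L) / 2 + 1) with hMdef
  have hMN : N ≤ M := le_max_left _ _
  have hM0 : (0 : ℝ) < M := lt_of_lt_of_le one_pos (hN1.trans hMN)
  refine ⟨M, hM0, ?_⟩
  intro y hy
  -- key decay estimate: outside [-M, M], f_y x < f_y 0
  have hdecay : ∀ x : ℝ, M < |x| → h₀ x + S x y < h₀ 0 + S 0 y := by
    intro x hx
    have hxN : N ≤ |x| := hMN.trans hx.le
    have h1 := hNbound x hxN
    have hb := (abs_le.1 (hshape x y)).2
    have hSle : S x y ≤ -(x - y) ^ 2 + C + c * (Real.log (2 + |x| + |y|)) ^ ((2:ℝ)/3) := by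
      linarith
    have hlog : (Real.log (2 + |x| + |y|)) ^ ((2:ℝ)/3) ≤ 3 + |x| + R := by
      have hone : (1:ℝ) ≤ 2 + |x| + |y| := by linarith [abs_nonneg x, abs_nonneg y]
      have := aux_logpow _ hone
      linarith [hyR y hy]
    have hmul : c * (Real.log (2 + |x| + |y|)) ^ ((2:ℝ)/3) ≤ c * (3 + |x| + R) :=
      mul_le_mul_of_nonneg_left hlog hc.le
    have hsq : -(x - y) ^ 2 ≤ -x ^ 2 + 2 * R * |x| := by
      have h1 : x * y ≤ |x| * |y| := le_abs_self _ |>.trans (abs_mul x y).le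
      have h2 : |x| * |y| ≤ |x| * R := mul_le_mul_of_nonneg_left (hyR y hy) (abs_nonneg x)
      nlinarith [sq_abs x, sq_nonneg y]
    have hMineq : (C + c * (3 + R) - L) / 2 + 1 ≤ |x| := ((le_max_right _ _).trans hx.le)
    have hfin : h₀ x + S x y ≤ -2 * |x| + C + c * (3 + R) := by
      have : h₀ x + S x y ≤ (h₀ x - x ^ 2) + 2 * R * |x| + C + c * (3 + |x| + R) := by
        linarith
      calc h₀ x + S x y ≤ -A * |x| + 2 * R * |x| + C + c * (3 + |x| + R) := by linarith
        _ = -2 * |x| + C + c * (3 + R) := by rw [hAdef]; ring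
    have hlt : h₀ x + S x y < L := by
      have : -2 * |x| + C + c * (3 + R) ≤ L - 2 := by linarith
      linarith
    exact lt_of_lt_of_le hlt (hf0 y hy)
  -- usc of f_y
  have hScy : Continuous fun x => S x y :=
    hScont.comp (continuous_id.prodMk continuous_const)
  have hfusc : UpperSemicontinuous fun x => h₀ x + S x y :=
    husc.add hScy.upperSemicontinuous
  -- max on Icc
  have hIcc : IsCompact (Set.Icc (-M) M) := isCompact_Icc
  have hIne : (Set.Icc (-M) M).Nonempty := ⟨0, by constructor <;> linarith⟩
  obtain ⟨x₀, hx₀mem, hx₀max⟩ := aux_usc_max hfusc hIcc hIne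
  have h0mem : (0 : ℝ) ∈ Set.Icc (-M) M := ⟨by linarith, by linarith⟩
  have hglobal : ∀ x : ℝ, h₀ x + S x y ≤ h₀ x₀ + S x₀ y := by
    intro x
    rcases le_or_gt (|x|) M with hxM | hxM
    · exact hx₀max x (abs_le.1 hxM)
    · exact ((hdecay x hxM).trans_le (hx₀max 0 h0mem)).le
  have hbdd : BddAbove (Set.range fun x => h₀ x + S x y) := by
    refine ⟨h₀ x₀ + S x₀ y, ?_⟩
    rintro _ ⟨x, rfl⟩
    exact hglobal x
  have hsSup : sSup (Set.range fun x => h₀ x + S x y) = h₀ x₀ + S x₀ y := by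
    apply le_antisymm
    · apply csSup_le (Set.range_nonempty _)
      rintro _ ⟨x, rfl⟩
      exact hglobal x
    · exact le_csSup hbdd ⟨x₀, rfl⟩
  have hbddI : BddAbove ((fun x => h₀ x + S x y) '' Set.Icc (-M) M) :=
    hbdd.mono (Set.image_subset_range _ _)
  have hsSupI : sSup ((fun x => h₀ x + S x y) '' Set.Icc (-M) M) = h₀ x₀ + S x₀ y := by
    apply le_antisymm
    · apply csSup_le (hIne.image _)
      rintro _ ⟨x, hxm, rfl⟩
      exact hx₀max x hxm
    · exact le_csSup hbddI ⟨x₀, hx₀mem, rfl⟩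
  exact ⟨hbdd, ⟨x₀, hsSup.symm⟩, by rw [hsSup, hsSupI]⟩
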